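/- Under consistency, ignorability, and monotonicity at every outcome level, the weighted sum of marginal probabilities of causation equals the difference of conditional means: Σ_{y ∈ L} y · P(Y₀ ≠ y and Y₁ = y) = E[Y | Z = z] − E[Y | Z ≠ z]. -/

import Mathlib

/-!
Given `Z = z` (resp. `Z ≠ z`), consistency replaces `Y` by `Y₁` (resp. `Y₀`), and ignorability
makes the conditioning invisible to `Y₁` (resp. `Y₀`; independence of an event passes to the
complement), so the two conditional means are `E[Y₁]` and `E[Y₀]`. Level by level, monotonicity
says `{Y₀ = y}` is a.e. contained in `{Y₁ = y}`, hence
`P(Y₀ ≠ y, Y₁ = y) = P(Y₁ = y) - P(Y₀ = y)`; multiplying by `y` and summing over `L` gives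
`E[Y₁] - E[Y₀]`.
-/

open MeasureTheory ProbabilityTheory

section

variable {Ω : Type*} [MeasurableSpace Ω] {μ : Measure Ω}

lemma integral_eq_sum_mul_measureReal_fiber [IsFiniteMeasure μ] {L : Finset ℝ} {W : Ω → ℝ}
    (hW : Measurable W) (hWL : ∀ ω, W ω ∈ L) :
    ∫ ω, W ω ∂μ = ∑ y ∈ L, y * μ.real {ω | W ω = y} := by
  have hfiber (y : ℝ) : MeasurableSet {ω | W ω = y} := hW (measurableSet_singleton y)
  have hW_eq : W = fun ω ↦ ∑ y ∈ L, {ω' | W ω' = y}.indicator (fun _ ↦ y) ω := by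
    funext ω
    simp only [Set.indicator, Set.mem_ofPred_eq]
    rw [Finset.sum_ite_eq L (W ω) (fun y ↦ y), if_pos (hWL ω)]
  conv_lhs => rw [hW_eq]
  rw [integral_finsetSum L fun y _ ↦ (integrable_const y).indicator (hfiber y)]
  refine Finset.sum_congr rfl fun y _ ↦ ?_
  rw [integral_indicator_const y (hfiber y), smul_eq_mul, mul_comm]

lemma measure_inter_compl_eq_mul [IsProbabilityMeasure μ] {s t : Set Ω} (hs : MeasurableSet s)
    (h : μ (t ∩ s) = μ t * μ s) : μ (t ∩ sᶜ) = μ t * μ sᶜ := by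
  have hsplit : μ t * μ s + μ (t ∩ sᶜ) = μ t * μ s + μ t * μ sᶜ := calc
    _ = μ t := by rw [← h, ← Set.sdiff_eq, measure_inter_add_sdiff t hs]
    _ = _ := by rw [← mul_add, measure_add_measure_compl hs, measure_univ, mul_one]
  exact (ENNReal.add_right_inj (by finiteness)).mp hsplit

lemma cond_eq_of_measure_inter_eq_mul {s t : Set Ω} (hs : MeasurableSet s) (hs₀ : μ s ≠ 0)
    (hs_top : μ s ≠ ⊤) (h : μ (t ∩ s) = μ t * μ s) : μ[t | s] = μ t := by
  refine (ENNReal.mul_left_inj hs₀ hs_top).mp ?_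
  rw [cond_mul_eq_inter' hs hs_top, Set.inter_comm, h]

lemma cond_preimage_eq_of_eqOn {α : Type*} {s : Set Ω} {X X' : Ω → α} (hs : MeasurableSet s)
    (hX : Set.EqOn X X' s) (t : Set α) : μ[X ⁻¹' t | s] = μ[X' ⁻¹' t | s] := by
  rw [cond_apply hs, cond_apply hs, hX.inter_preimage_eq]

lemma measureReal_sdiff_eq_sub_of_sdiff_null [IsFiniteMeasure μ] {s t : Set Ω}
    (ht : MeasurableSet t) (h : μ (t \ s) = 0) : μ.real (s \ t) = μ.real s - μ.real t := by
  have hinter : μ.real (s ∩ t) = μ.real t := by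
    rw [measureReal_def, measureReal_def, Set.inter_comm, measure_inter_conull' h]
  linarith [measureReal_sdiff_add_inter (μ := μ) (s := s) ht]

end

theorem mpoc_weighted_sum_eq_conditional_mean_difference_general
    {Ω 𝒵 : Type*} [MeasurableSpace Ω]
    (μ : Measure Ω) [IsProbabilityMeasure μ]
    (L : Finset ℝ)
    (Z : Ω → 𝒵) (z : 𝒵)
    (Y Y1 Y0 : Ω → ℝ)
    (hYm : Measurable Y) (hY0m : Measurable Y0)
    (hYL : ∀ ω, Y ω ∈ L)
    (hmZ : MeasurableSet {ω | Z ω = z})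
    (hpos : 0 < μ {ω | Z ω = z}) (hlt : μ {ω | Z ω = z} < 1)
    (hcons1 : ∀ ω, Z ω = z → Y ω = Y1 ω)
    (hcons0 : ∀ ω, Z ω ≠ z → Y ω = Y0 ω)
    (hind1 : ∀ y' ∈ L,
      μ ({ω | Y1 ω = y'} ∩ {ω | Z ω = z}) = μ {ω | Y1 ω = y'} * μ {ω | Z ω = z})
    (hind0 : ∀ y' ∈ L,
      μ ({ω | Y0 ω = y'} ∩ {ω | Z ω = z}) = μ {ω | Y0 ω = y'} * μ {ω | Z ω = z})
    (hmono : ∀ y ∈ L, μ {ω | Y0 ω = y ∧ Y1 ω ≠ y} = 0) :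
    ∑ y ∈ L, y * (μ {ω | Y0 ω ≠ y ∧ Y1 ω = y}).toReal
      = (∫ ω, Y ω ∂(μ[|{ω | Z ω = z}])) - (∫ ω, Y ω ∂(μ[|{ω | Z ω ≠ z}])) := by
  set E : Set Ω := {ω | Z ω = z}
  change _ = _ - ∫ ω, Y ω ∂(μ[|Eᶜ])
  have hE₀ : μ E ≠ 0 := hpos.ne'
  have hEc₀ : μ Eᶜ ≠ 0 := by
    rw [prob_compl_eq_one_sub hmZ]; exact (tsub_pos_of_lt hlt).ne'
  have := cond_isProbabilityMeasure (μ := μ) hE₀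
  have := cond_isProbabilityMeasure (μ := μ) hEc₀
  have hlaw₁ (y : ℝ) (hy : y ∈ L) : μ[{ω | Y ω = y} | E] = μ {ω | Y1 ω = y} :=
    (cond_preimage_eq_of_eqOn hmZ hcons1 {y}).trans
      (cond_eq_of_measure_inter_eq_mul hmZ hE₀ (measure_ne_top _ _) (hind1 y hy))
  have hlaw₀ (y : ℝ) (hy : y ∈ L) : μ[{ω | Y ω = y} | Eᶜ] = μ {ω | Y0 ω = y} :=
    (cond_preimage_eq_of_eqOn hmZ.compl hcons0 {y}).trans
      (cond_eq_of_measure_inter_eq_mul hmZ.compl hEc₀ (measure_ne_top _ _)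
        (measure_inter_compl_eq_mul hmZ (hind0 y hy)))
  rw [integral_eq_sum_mul_measureReal_fiber hYm hYL,
    integral_eq_sum_mul_measureReal_fiber hYm hYL, ← Finset.sum_sub_distrib]
  refine Finset.sum_congr rfl fun y hy ↦ ?_
  have hlevel : μ.real {ω | Y0 ω ≠ y ∧ Y1 ω = y}
      = μ.real {ω | Y1 ω = y} - μ.real {ω | Y0 ω = y} := by
    rw [show {ω | Y0 ω ≠ y ∧ Y1 ω = y} = {ω | Y1 ω = y} \ {ω | Y0 ω = y} from
      Set.ext fun _ ↦ and_comm]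
    exact measureReal_sdiff_eq_sub_of_sdiff_null (hY0m (measurableSet_singleton y)) (hmono y hy)
  rw [← mul_sub, measureReal_def, measureReal_def, hlaw₁ y hy, hlaw₀ y hy]
  exact congrArg (y * ·) hlevel

/-- Under consistency, ignorability, and monotonicity at every outcome level, the
weighted sum of marginal probabilities of causation equals the difference of
conditional means:
`Σ_{y ∈ L} y · P(Y₀ ≠ y ∧ Y₁ = y) = E[Y | Z = z] − E[Y | Z ≠ z]`. -/
theorem mpoc_weighted_sum_eq_conditional_mean_difference
    {Ω 𝒵 : Type*} [MeasurableSpace Ω]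
    (μ : Measure Ω) [IsProbabilityMeasure μ]
    (L : Finset ℝ) (hL : ∀ x ∈ L, 0 ≤ x)
    (Z : Ω → 𝒵) (z : 𝒵)
    (Y Y1 Y0 : Ω → ℝ)
    (hYm : Measurable Y) (hY1m : Measurable Y1) (hY0m : Measurable Y0)
    (hYL : ∀ ω, Y ω ∈ L) (hY1L : ∀ ω, Y1 ω ∈ L) (hY0L : ∀ ω, Y0 ω ∈ L)
    (hmZ : MeasurableSet {ω | Z ω = z})
    (hpos : 0 < μ {ω | Z ω = z}) (hlt : μ {ω | Z ω = z} < 1)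
    (hcons1 : ∀ ω, Z ω = z → Y ω = Y1 ω)
    (hcons0 : ∀ ω, Z ω ≠ z → Y ω = Y0 ω)
    (hind1 : ∀ y' ∈ L,
      μ ({ω | Y1 ω = y'} ∩ {ω | Z ω = z}) = μ {ω | Y1 ω = y'} * μ {ω | Z ω = z})
    (hind0 : ∀ y' ∈ L,
      μ ({ω | Y0 ω = y'} ∩ {ω | Z ω = z}) = μ {ω | Y0 ω = y'} * μ {ω | Z ω = z})
    (hmono : ∀ y ∈ L, μ {ω | Y0 ω = y ∧ Y1 ω ≠ y} = 0) :
    ∑ y ∈ L, y * (μ {ω | Y0 ω ≠ y ∧ Y1 ω = y}).toReal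
      = (∫ ω, Y ω ∂(μ[|{ω | Z ω = z}])) - (∫ ω, Y ω ∂(μ[|{ω | Z ω ≠ z}])) :=
  mpoc_weighted_sum_eq_conditional_mean_difference_general μ L Z z Y Y1 Y0 hYm hY0m hYL hmZ hpos hlt
    hcons1 hcons0 hind1 hind0 hmono
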